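/- Let F : ℝ → ℂ be twice continuously differentiable with |F''| ≤ C on [−a, a] (a > 0). Then ∫_{−a}^{a} e^{−X s²} F(s) ds = √π · F(0) · X^{−1/2} + O(X^{−3/2}) as X → ∞; more precisely there is a constant C' depending only on C, a, |F(0)|, |F'(0)| such that the difference is bounded by C' X^{−3/2} for all X ≥ 1. -/

import Mathlib

/-!
Write `F s = F 0 + s • F' 0 + R s` with `‖R s‖ ≤ C s²` (Taylor). Against the even weight
`e^{-Xs²}` the linear term integrates to zero; the constant term gives the full Gaussian integral
`√π X^{-1/2}` minus its tail off `[-a, a]`. Both the tail (where `s²/a² ≥ 1`) and the remainder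
are bounded by the second moment `∫ s² e^{-Xs²} ds = (√π/2) X^{-3/2}`.
-/

open MeasureTheory Real Set

variable {E : Type*} [NormedAddCommGroup E] [NormedSpace ℝ E]

theorem norm_sub_sub_smul_deriv_le_mul_sq {F : ℝ → E} (hF : Differentiable ℝ F)
    (hF' : Differentiable ℝ (deriv F)) {C s : ℝ}
    (hC : ∀ t ∈ uIcc 0 s, ‖deriv (deriv F) t‖ ≤ C) :
    ‖F s - F 0 - s • deriv F 0‖ ≤ C * s ^ 2 := by
  have hC0 : 0 ≤ C := (norm_nonneg _).trans (hC 0 left_mem_uIcc)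
  have hderiv : ∀ t ∈ uIcc 0 s, ‖deriv F t - deriv F 0‖ ≤ C * |s| := fun t ht =>
    calc ‖deriv F t - deriv F 0‖ ≤ C * ‖t - 0‖ :=
          (convex_uIcc 0 s).norm_image_sub_le_of_norm_deriv_le (fun x _ => hF' x) hC
            left_mem_uIcc ht
      _ ≤ C * |s| := by
          gcongr
          simpa using abs_sub_left_of_mem_uIcc ht
  have hremainder : ∀ t, HasDerivAt (fun t : ℝ => F t - F 0 - t • deriv F 0)
      (deriv F t - deriv F 0) t := fun t => by
    simpa using ((hF t).hasDerivAt.sub_const (F 0)).fun_sub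
      ((hasDerivAt_id t).smul_const (deriv F 0))
  have := (convex_uIcc 0 s).norm_image_sub_le_of_norm_hasDerivWithin_le
    (fun t _ => (hremainder t).hasDerivWithinAt) hderiv left_mem_uIcc right_mem_uIcc
  simpa [sq, mul_assoc] using this

theorem intervalIntegral.integral_neg_to_self_eq_zero_of_odd {f : ℝ → E}
    (hf : ∀ x, f (-x) = -f x) (a : ℝ) : ∫ x in -a..a, f x = 0 := by
  have h := intervalIntegral.integral_comp_neg (a := -a) (b := a) f
  simp only [hf, intervalIntegral.integral_neg, neg_neg] at h
  have htwice : (2 : ℝ) • ∫ x in -a..a, f x = 0 := by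
    rw [two_smul]
    nth_rw 1 [← h]
    exact neg_add_cancel _
  exact (smul_eq_zero.mp htwice).resolve_left two_ne_zero

theorem integrable_sq_mul_exp_neg_mul_sq {b : ℝ} (hb : 0 < b) :
    Integrable fun x : ℝ => x ^ 2 * exp (-b * x ^ 2) := by
  simpa [rpow_two] using integrable_rpow_mul_exp_neg_mul_sq hb (s := 2) (by norm_num)

theorem integral_sq_mul_exp_neg_mul_sq {b : ℝ} (hb : 0 < b) :
    ∫ x, x ^ 2 * exp (-b * x ^ 2) = √π / 2 * b ^ (-(3 : ℝ) / 2) := by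
  have hhalf := integral_rpow_mul_exp_neg_mul_rpow (p := 2) (q := 2) two_pos (by norm_num) hb
  have hsymm := integral_comp_abs (f := fun x => x ^ (2 : ℝ) * exp (-b * x ^ (2 : ℝ)))
  simp only [rpow_two, sq_abs] at hhalf hsymm
  rw [hsymm, hhalf, show ((2 : ℝ) + 1) / 2 = 1 / 2 + 1 by norm_num,
    Gamma_add_one (by norm_num), Gamma_one_half_eq]
  norm_num
  ring

theorem setIntegral_compl_Ioc_exp_neg_mul_sq_le {a X : ℝ} (ha : 0 < a) (hX : 0 < X) :
    ∫ s in (Ioc (-a) a)ᶜ, exp (-X * s ^ 2) ≤ √π / (2 * a ^ 2) * X ^ (-(3 : ℝ) / 2) := by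
  have hmoment := integrable_sq_mul_exp_neg_mul_sq hX
  calc ∫ s in (Ioc (-a) a)ᶜ, exp (-X * s ^ 2)
      ≤ ∫ s in (Ioc (-a) a)ᶜ, s ^ 2 * exp (-X * s ^ 2) / a ^ 2 := by
        refine setIntegral_mono_on (integrable_exp_neg_mul_sq hX).integrableOn
          (hmoment.div_const _).integrableOn measurableSet_Ioc.compl fun s hs => ?_
        have has : a ^ 2 ≤ s ^ 2 := by
          rw [mem_compl_iff, mem_Ioc, not_and_or, not_lt, not_le] at hs
          rcases hs with hs | hs <;> nlinarith
        rw [le_div_iff₀ (by positivity), mul_comm]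
        exact mul_le_mul_of_nonneg_right has (exp_pos _).le
    _ ≤ ∫ s, s ^ 2 * exp (-X * s ^ 2) / a ^ 2 :=
        setIntegral_le_integral (hmoment.div_const _) (.of_forall fun s => by positivity)
    _ = √π / (2 * a ^ 2) * X ^ (-(3 : ℝ) / 2) := by
        rw [integral_div, integral_sq_mul_exp_neg_mul_sq hX]
        field_simp

theorem abs_intervalIntegral_exp_neg_mul_sq_sub_le {a X : ℝ} (ha : 0 < a) (hX : 0 < X) :
    |(∫ s in -a..a, exp (-X * s ^ 2)) - √π * X ^ (-(1 : ℝ) / 2)|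
      ≤ √π / (2 * a ^ 2) * X ^ (-(3 : ℝ) / 2) := by
  have hfull : ∫ s, exp (-X * s ^ 2) = √π * X ^ (-(1 : ℝ) / 2) := by
    rw [integral_gaussian, sqrt_div pi_nonneg, div_eq_mul_inv, sqrt_eq_rpow X, ← rpow_neg hX.le]
    norm_num
  have hsplit :=
    integral_add_compl (s := Ioc (-a) a) measurableSet_Ioc (integrable_exp_neg_mul_sq hX)
  rw [intervalIntegral.integral_of_le (by linarith), ← hfull, ← hsplit, sub_add_cancel_left,
    abs_neg, abs_of_nonneg (setIntegral_nonneg measurableSet_Ioc.compl fun s _ => by positivity)]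
  exact setIntegral_compl_Ioc_exp_neg_mul_sq_le ha hX

theorem norm_intervalIntegral_exp_neg_mul_sq_smul_le {R : ℝ → E} {a b C X : ℝ} (hab : a ≤ b)
    (hC : 0 ≤ C) (hX : 0 < X) (hR : ∀ s ∈ Icc a b, ‖R s‖ ≤ C * s ^ 2) :
    ‖∫ s in a..b, exp (-X * s ^ 2) • R s‖ ≤ C * (√π / 2 * X ^ (-(3 : ℝ) / 2)) := by
  have hmoment := integrable_sq_mul_exp_neg_mul_sq hX
  calc ‖∫ s in a..b, exp (-X * s ^ 2) • R s‖
      ≤ ∫ s in a..b, C * (s ^ 2 * exp (-X * s ^ 2)) := by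
        refine intervalIntegral.norm_integral_le_of_norm_le hab (.of_forall fun s hs => ?_)
          (hmoment.const_mul C).intervalIntegrable
        rw [norm_smul, norm_of_nonneg (exp_pos _).le]
        nlinarith [hR s (Ioc_subset_Icc_self hs), exp_pos (-X * s ^ 2)]
    _ ≤ C * ∫ s, s ^ 2 * exp (-X * s ^ 2) := by
        rw [intervalIntegral.integral_const_mul, intervalIntegral.integral_of_le hab]
        exact mul_le_mul_of_nonneg_left
          (setIntegral_le_integral hmoment (.of_forall fun s => by positivity)) hC
    _ = C * (√π / 2 * X ^ (-(3 : ℝ) / 2)) := by rw [integral_sq_mul_exp_neg_mul_sq hX]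

theorem norm_intervalIntegral_exp_neg_mul_sq_smul_sub_le [CompleteSpace E] {F : ℝ → E}
    (hF : ContDiff ℝ 2 F) {a C X : ℝ} (ha : 0 < a)
    (hC : ∀ s ∈ Icc (-a) a, ‖deriv (deriv F) s‖ ≤ C) (hX : 0 < X) :
    ‖(∫ s in -a..a, exp (-X * s ^ 2) • F s) - (√π * X ^ (-(1 : ℝ) / 2)) • F 0‖
      ≤ (‖F 0‖ / a ^ 2 + C) * (√π / 2 * X ^ (-(3 : ℝ) / 2)) := by
  have hC0 : 0 ≤ C := (norm_nonneg _).trans (hC 0 ⟨by linarith, ha.le⟩)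
  have hFd : Differentiable ℝ F := hF.differentiable (by norm_num)
  have hF'd : Differentiable ℝ (deriv F) := by
    simpa using hF.differentiable_iteratedDeriv 1 (by norm_num)
  set R : ℝ → E := fun s => F s - F 0 - s • deriv F 0
  have hR : ∀ s ∈ Icc (-a) a, ‖R s‖ ≤ C * s ^ 2 := fun s hs =>
    norm_sub_sub_smul_deriv_le_mul_sq hFd hF'd fun t ht =>
      hC t (ordConnected_Icc.uIcc_subset ⟨by linarith, ha.le⟩ hs ht)
  have hsplit : ∫ s in -a..a, exp (-X * s ^ 2) • F s
      = (∫ s in -a..a, exp (-X * s ^ 2)) • F 0 + ∫ s in -a..a, exp (-X * s ^ 2) • R s := by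
    have hodd : ∫ s in -a..a, exp (-X * s ^ 2) * s = 0 :=
      intervalIntegral.integral_neg_to_self_eq_zero_of_odd (fun s => by simp) a
    calc ∫ s in -a..a, exp (-X * s ^ 2) • F s
        = ∫ s in -a..a, (exp (-X * s ^ 2) • F 0 + (exp (-X * s ^ 2) * s) • deriv F 0
            + exp (-X * s ^ 2) • R s) :=
          intervalIntegral.integral_congr fun s _ => by simp only [R]; module
      _ = _ := by
        rw [intervalIntegral.integral_add, intervalIntegral.integral_add,
          intervalIntegral.integral_smul_const, intervalIntegral.integral_smul_const, hodd,
          zero_smul, add_zero]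
        all_goals apply Continuous.intervalIntegrable; fun_prop
  calc ‖(∫ s in -a..a, exp (-X * s ^ 2) • F s) - (√π * X ^ (-(1 : ℝ) / 2)) • F 0‖
      = ‖((∫ s in -a..a, exp (-X * s ^ 2)) - √π * X ^ (-(1 : ℝ) / 2)) • F 0
          + ∫ s in -a..a, exp (-X * s ^ 2) • R s‖ := by rw [hsplit, sub_smul]; abel_nf
    _ ≤ |(∫ s in -a..a, exp (-X * s ^ 2)) - √π * X ^ (-(1 : ℝ) / 2)| * ‖F 0‖
          + ‖∫ s in -a..a, exp (-X * s ^ 2) • R s‖ := by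
        rw [← Real.norm_eq_abs, ← norm_smul]
        exact norm_add_le _ _
    _ ≤ √π / (2 * a ^ 2) * X ^ (-(3 : ℝ) / 2) * ‖F 0‖ + C * (√π / 2 * X ^ (-(3 : ℝ) / 2)) := by
        gcongr
        · exact abs_intervalIntegral_exp_neg_mul_sq_sub_le ha hX
        · exact norm_intervalIntegral_exp_neg_mul_sq_smul_le (by linarith) hC0 hX hR
    _ = (‖F 0‖ / a ^ 2 + C) * (√π / 2 * X ^ (-(3 : ℝ) / 2)) := by
        field_simp

theorem stmt11 (F : ℝ → ℂ) (hF : ContDiff ℝ 2 F) (a C : ℝ) (ha : 0 < a)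
    (hC : ∀ s ∈ Set.Icc (-a) a, ‖deriv (deriv F) s‖ ≤ C) :
    ∃ C' : ℝ, 0 < C' ∧ ∀ X : ℝ, 1 ≤ X →
      ‖(∫ s in (-a)..a, (Real.exp (-X * s ^ 2) : ℂ) * F s) -
          Real.sqrt π * F 0 * ((X ^ (-(1 : ℝ) / 2) : ℝ) : ℂ)‖ ≤ C' * X ^ (-(3 : ℝ) / 2) := by
  have hC0 : 0 ≤ C := (norm_nonneg _).trans (hC 0 ⟨by linarith, ha.le⟩)
  refine ⟨(‖F 0‖ / a ^ 2 + C + 1) * (√π / 2), by positivity, fun X hX => ?_⟩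
  have hbound := norm_intervalIntegral_exp_neg_mul_sq_smul_sub_le hF ha hC (by linarith : 0 < X)
  simp only [Complex.real_smul, Complex.ofReal_mul] at hbound
  calc _ = ‖(∫ s in -a..a, (exp (-X * s ^ 2) : ℂ) * F s)
          - (√π : ℂ) * ((X ^ (-(1 : ℝ) / 2) : ℝ) : ℂ) * F 0‖ := by ring_nf
    _ ≤ (‖F 0‖ / a ^ 2 + C) * (√π / 2 * X ^ (-(3 : ℝ) / 2)) := hbound
    _ ≤ (‖F 0‖ / a ^ 2 + C + 1) * (√π / 2) * X ^ (-(3 : ℝ) / 2) := by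
        rw [← mul_assoc]
        gcongr ?_ * _ * _
        linarith
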